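/- Let h denote the binary entropy function h(q) = −q·log₂(q) − (1−q)·log₂(1−q) (with h(0)=h(1)=0), and define G : [3/4, (2+√2)/4] → ℝ by G(x) = 1 − h(1/2 + (1/2)·√(16x² − 16x + 3)). Let γ ∈ (0,1], let s be a positive integer, and let ω₁,…,ω_s ∈ [3/4, (2+√2)/4]. Set c = ∑_{i=1}^{s} γ(1−γ)^{i−1} ωᵢ and ω* = c / (1 − (1−γ)^{s}). Then ω* ∈ [3/4, (2+√2)/4] and ∑_{i=1}^{s} (1−γ)^{i−1} G(ωᵢ) ≥ (∑_{i=1}^{s} (1−γ)^{i−1}) · G(ω*). In particular, the minimum of ∑_{i=1}^{s} (1−γ)^{i−1} G(ωᵢ) over all ω₁,…,ω_s ∈ [3/4, (2+√2)/4] satisfying the constraint ∑_{i=1}^{s} γ(1−γ)^{i−1} ωᵢ = c is attained when ωᵢ = ω* for all i. -/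

import Mathlib

/-!
Jensen's inequality, once `G` is known to be convex on `[3/4, (2+√2)/4]`: the weights
`(1-γ)^(i-1)` sum to `(1 - (1-γ)^s)/γ`, so `ω*` is exactly the weighted mean of the `ωᵢ`.

For the convexity, write `t = √(16x² - 16x + 3) ∈ (0, 1)`. Then
`G'(x) = (8x - 4) · L(t)/t / log 2` with `L(t) = log(1+t) - log(1-t)`. Here `8x - 4` and `t`
increase with `x`, and `L(t)/t` increases with `t`, being the slope from `0` of `L`, which is
convex on `[0, 1)` since `L'(t) = 2/(1-t²)`.
-/

/-- The binary entropy function `h(q) = −q·log₂ q − (1−q)·log₂(1−q)`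
(with the conventions `h 0 = h 1 = 0`, which hold automatically since
`Real.logb 2 0 = 0`). -/
noncomputable def binaryEntropy (q : ℝ) : ℝ :=
  -q * Real.logb 2 q - (1 - q) * Real.logb 2 (1 - q)

/-- The single-round entropy bound of the CHSH-based protocol, as a function of
the CHSH winning probability `x ∈ [3/4, (2+√2)/4]`. -/
noncomputable def chshEntropyBound (x : ℝ) : ℝ :=
  1 - binaryEntropy (1 / 2 + (1 / 2) * Real.sqrt (16 * x ^ 2 - 16 * x + 3))

open Real Set

lemma binaryEntropy_eq_binEntropy_div_log_two (q : ℝ) :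
    binaryEntropy q = binEntropy q / log 2 := by
  unfold binaryEntropy binEntropy logb
  rw [log_inv, log_inv]
  ring

lemma hasDerivAt_log_one_add_sub_log_one_sub {t : ℝ} (ht : t ∈ Ioo (-1 : ℝ) 1) :
    HasDerivAt (fun t => log (1 + t) - log (1 - t)) (2 / (1 - t ^ 2)) t := by
  obtain ⟨ht₀, ht₁⟩ := ht
  refine ((((hasDerivAt_id' t).const_add 1).log (by linarith)).sub
    (((hasDerivAt_id' t).const_sub 1).log (by linarith))).congr_deriv ?_
  have : 1 + t ≠ 0 := by linarith
  have : 1 - t ≠ 0 := by linarith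
  have : 1 - t ^ 2 ≠ 0 := by nlinarith
  field_simp
  ring

lemma convexOn_log_one_add_sub_log_one_sub :
    ConvexOn ℝ (Ico 0 1) (fun t => log (1 + t) - log (1 - t)) := by
  have hderiv : ∀ t ∈ Ico (0 : ℝ) 1,
      HasDerivAt (fun t => log (1 + t) - log (1 - t)) (2 / (1 - t ^ 2)) t :=
    fun t ht => hasDerivAt_log_one_add_sub_log_one_sub ⟨by linarith [ht.1], ht.2⟩
  refine MonotoneOn.convexOn_of_deriv (convex_Ico 0 1)
    (fun t ht => (hderiv t ht).continuousAt.continuousWithinAt)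
    (fun t ht => (hderiv t (interior_subset ht)).differentiableAt.differentiableWithinAt) ?_
  rw [interior_Ico]
  intro x hx y hy hxy
  rw [(hderiv x (Ioo_subset_Ico_self hx)).deriv, (hderiv y (Ioo_subset_Ico_self hy)).deriv]
  have : y ^ 2 < 1 := by nlinarith [hy.1, hy.2]
  gcongr
  exact hx.1.le

lemma monotoneOn_log_one_add_sub_log_one_sub_div :
    MonotoneOn (fun t => (log (1 + t) - log (1 - t)) / t) (Ioo 0 1) := by
  intro x hx y hy hxy
  simpa using convexOn_log_one_add_sub_log_one_sub.secant_mono (a := 0) ⟨le_rfl, one_pos⟩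
    (Ioo_subset_Ico_self hx) (Ioo_subset_Ico_self hy) hx.1.ne' hy.1.ne' hxy

lemma log_one_add_sub_log_one_sub_div_nonneg {t : ℝ} (ht : t ∈ Ioo (0 : ℝ) 1) :
    0 ≤ (log (1 + t) - log (1 - t)) / t := by
  have h₁ : 0 ≤ log (1 + t) := log_nonneg (by linarith [ht.1])
  have h₂ : log (1 - t) ≤ 0 := log_nonpos (by linarith [ht.2]) (by linarith [ht.1])
  exact div_nonneg (by linarith) ht.1.le

lemma hasDerivAt_one_sub_binEntropy_div_log_two {t : ℝ} (ht : t ∈ Ioo (-1 : ℝ) 1) :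
    HasDerivAt (fun t => 1 - binEntropy (1 / 2 + 1 / 2 * t) / log 2)
      ((log (1 + t) - log (1 - t)) / (2 * log 2)) t := by
  obtain ⟨ht₀, ht₁⟩ := ht
  have hq : HasDerivAt (fun t : ℝ => 1 / 2 + 1 / 2 * t) (1 / 2) t := by
    simpa using ((hasDerivAt_id' t).const_mul (1 / 2 : ℝ)).const_add (1 / 2 : ℝ)
  have := (((hasDerivAt_binEntropy (p := 1 / 2 + 1 / 2 * t) (by linarith) (by linarith)).comp t
    hq).div_const (log 2)).const_sub 1
  refine this.congr_deriv ?_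
  rw [show 1 - (1 / 2 + 1 / 2 * t) = (1 - t) / 2 by ring,
    show 1 / 2 + 1 / 2 * t = (1 + t) / 2 by ring,
    log_div (by linarith) two_ne_zero, log_div (by linarith) two_ne_zero]
  ring

lemma sqrt_chsh_mem_Ioo {x : ℝ} (hx : x ∈ Ioo (3 / 4 : ℝ) ((2 + √2) / 4)) :
    √(16 * x ^ 2 - 16 * x + 3) ∈ Ioo 0 1 := by
  obtain ⟨hx₀, hx₁⟩ := hx
  have h2 : √2 ^ 2 = 2 := sq_sqrt zero_le_two
  have hpos : 0 < 16 * x ^ 2 - 16 * x + 3 := by nlinarith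
  have hlt : 16 * x ^ 2 - 16 * x + 3 < 1 := by nlinarith [sqrt_nonneg 2]
  exact ⟨sqrt_pos.2 hpos, (sqrt_lt' one_pos).2 (by linarith)⟩

lemma hasDerivAt_chshEntropyBound {x : ℝ} (hx : x ∈ Ioo (3 / 4 : ℝ) ((2 + √2) / 4)) :
    HasDerivAt chshEntropyBound
      ((8 * x - 4) * ((log (1 + √(16 * x ^ 2 - 16 * x + 3)) -
        log (1 - √(16 * x ^ 2 - 16 * x + 3))) / √(16 * x ^ 2 - 16 * x + 3)) / log 2) x := by
  obtain ⟨ht₀, ht₁⟩ := sqrt_chsh_mem_Ioo hx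
  have hP : HasDerivAt (fun x : ℝ => 16 * x ^ 2 - 16 * x + 3) (32 * x - 16) x := by
    refine ((((hasDerivAt_pow 2 x).const_mul 16).sub
      ((hasDerivAt_id' x).const_mul 16)).add_const 3).congr_deriv ?_
    ring
  have hsqrt := hP.sqrt (sqrt_pos.1 ht₀).ne'
  have := (hasDerivAt_one_sub_binEntropy_div_log_two ⟨by linarith, ht₁⟩).comp x hsqrt
  unfold chshEntropyBound
  simp only [binaryEntropy_eq_binEntropy_div_log_two]
  refine this.congr_deriv ?_
  field_simp
  ring

lemma monotoneOn_deriv_chshEntropyBound :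
    MonotoneOn (deriv chshEntropyBound) (Ioo (3 / 4 : ℝ) ((2 + √2) / 4)) := by
  intro x hx y hy hxy
  rw [(hasDerivAt_chshEntropyBound hx).deriv, (hasDerivAt_chshEntropyBound hy).deriv]
  have hsqrt : √(16 * x ^ 2 - 16 * x + 3) ≤ √(16 * y ^ 2 - 16 * y + 3) :=
    sqrt_le_sqrt (by nlinarith [hx.1])
  gcongr ?_ * ?_ / _
  · exact log_one_add_sub_log_one_sub_div_nonneg (sqrt_chsh_mem_Ioo hx)
  · linarith [hx.1]
  · linarith
  · exact monotoneOn_log_one_add_sub_log_one_sub_div (sqrt_chsh_mem_Ioo hx)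
      (sqrt_chsh_mem_Ioo hy) hsqrt

lemma convexOn_chshEntropyBound :
    ConvexOn ℝ (Icc (3 / 4 : ℝ) ((2 + √2) / 4)) chshEntropyBound := by
  refine MonotoneOn.convexOn_of_deriv (convex_Icc _ _) ?_ ?_ ?_
  · unfold chshEntropyBound
    simp only [binaryEntropy_eq_binEntropy_div_log_two]
    fun_prop
  · rw [interior_Icc]
    exact fun x hx => (hasDerivAt_chshEntropyBound hx).differentiableAt.differentiableWithinAt
  · rw [interior_Icc]
    exact monotoneOn_deriv_chshEntropyBound

lemma ConvexOn.sum_mul_map_centerMass_le {ι E : Type*} [AddCommGroup E] [Module ℝ E]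
    {s : Set E} {f : E → ℝ} (hf : ConvexOn ℝ s f) {t : Finset ι} {w : ι → ℝ} {p : ι → E}
    (h₀ : ∀ i ∈ t, 0 ≤ w i) (h₁ : 0 < ∑ i ∈ t, w i) (hmem : ∀ i ∈ t, p i ∈ s) :
    (∑ i ∈ t, w i) * f (t.centerMass w p) ≤ ∑ i ∈ t, w i * f (p i) := by
  calc (∑ i ∈ t, w i) * f (t.centerMass w p)
      ≤ (∑ i ∈ t, w i) * t.centerMass w (f ∘ p) :=
        mul_le_mul_of_nonneg_left (hf.map_centerMass_le h₀ h₁ hmem) h₁.le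
    _ = ∑ i ∈ t, w i * f (p i) := by
        rw [Finset.centerMass, smul_eq_mul, mul_inv_cancel_left₀ h₁.ne']
        rfl

lemma one_sub_one_sub_pow_eq_mul_sum (γ : ℝ) (s : ℕ) :
    1 - (1 - γ) ^ s = γ * ∑ i : Fin s, (1 - γ) ^ (i : ℕ) := by
  rw [Fin.sum_univ_eq_sum_range (fun i => (1 - γ) ^ i), ← mul_neg_geom_sum, sub_sub_cancel]

/-- Rounds are indexed by `i : Fin s`, so the paper's `(1-γ)^(i-1)` is `(1-γ)^i` here. -/
theorem block_entropy_min_at_uniform_winning_probability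
    (γ : ℝ) (hγ : γ ∈ Set.Ioc (0 : ℝ) 1) (s : ℕ) (hs : 0 < s)
    (ω : Fin s → ℝ)
    (hω : ∀ i, ω i ∈ Set.Icc (3 / 4 : ℝ) ((2 + Real.sqrt 2) / 4))
    (c : ℝ) (hc : c = ∑ i : Fin s, γ * (1 - γ) ^ (i : ℕ) * ω i)
    (ωstar : ℝ) (hstar : ωstar = c / (1 - (1 - γ) ^ s)) :
    ωstar ∈ Set.Icc (3 / 4 : ℝ) ((2 + Real.sqrt 2) / 4) ∧
    (∑ i : Fin s, (1 - γ) ^ (i : ℕ) * chshEntropyBound (ω i)) ≥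
      (∑ i : Fin s, (1 - γ) ^ (i : ℕ)) * chshEntropyBound ωstar := by
  obtain ⟨hγ₀, hγ₁⟩ := hγ
  set w : Fin s → ℝ := fun i => (1 - γ) ^ (i : ℕ)
  have hw : ∀ i ∈ Finset.univ, 0 ≤ w i := fun i _ => pow_nonneg (sub_nonneg.2 hγ₁) _
  have hW : 0 < ∑ i, w i :=
    Finset.sum_pos' hw ⟨⟨0, hs⟩, Finset.mem_univ _, by simp [w]⟩
  have hmean : Finset.univ.centerMass w ω = ωstar := by
    rw [hstar, hc, one_sub_one_sub_pow_eq_mul_sum, Finset.centerMass]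
    simp only [w, smul_eq_mul, mul_assoc, ← Finset.mul_sum]
    field_simp
  have hω' : ∀ i ∈ Finset.univ, ω i ∈ Icc (3 / 4 : ℝ) ((2 + √2) / 4) := fun i _ => hω i
  refine ⟨hmean ▸ (convex_Icc _ _).centerMass_mem hw hW hω', ?_⟩
  simpa [hmean] using convexOn_chshEntropyBound.sum_mul_map_centerMass_le hw hW hω'
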